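/- Eckart–Young theorem (Frobenius norm): Let A ∈ ℝ^{m×n} have SVD A = Σ_{i=1}^{min(m,n)} σ_i u_i v_iᵀ with σ_1 ≥ σ_2 ≥ ... ≥ 0. For k < rank(A), the matrix A_k = Σ_{i=1}^k σ_i u_i v_iᵀ satisfies ‖A - A_k‖_F² = Σ_{i>k} σ_i² ≤ ‖A - E‖_F² for every E ∈ ℝ^{m×n} with rank(E) ≤ k. -/

import Mathlib

/-!
The squared Frobenius norm is `trace (Mᵀ * M)`. Let `P = qᵀ * q` be the orthogonal projection onto
the column space of `E`, with `q` having `rank E ≤ k` orthonormal rows. Since `(1 - P) * E = 0`,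
`‖A - E‖² ≥ ‖(1 - P) * A‖² = ‖A‖² - ‖q * A‖²`. For `A = ∑ σᵢ uᵢ vᵢᵀ` one finds
`‖q * A‖² = ∑ σᵢ² tᵢ` with `tᵢ = ‖q * uᵢ‖² ∈ [0, 1]` (Bessel) and `∑ tᵢ ≤ rank E ≤ k` (Bessel for
the `uᵢ`), so `‖q * A‖² ≤ ∑_{i<k} σᵢ²` because `σᵢ²` is decreasing. As `‖A‖² = ∑ σᵢ²`, this
gives `‖A - E‖² ≥ ∑_{i≥k} σᵢ² = ‖A - A_k‖²`.
-/

open Matrix Finset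

theorem Antitone.sum_mul_le_sum_filter_val_lt {N k : ℕ} {c t : Fin N → ℝ} (hc : Antitone c)
    (hc0 : ∀ i, 0 ≤ c i) (ht0 : ∀ i, 0 ≤ t i) (ht1 : ∀ i, t i ≤ 1) (hts : ∑ i, t i ≤ k) :
    ∑ i, c i * t i ≤ ∑ i with i.val < k, c i := by
  rcases lt_or_ge k N with hk | hk
  · set κ : Fin N := ⟨k, hk⟩
    -- `c κ` separates the values of `c` on the first `k` indices from the others.
    have hpt : ∀ i, c i * t i ≤ c κ * t i + if i.val < k then c i - c κ else 0 := by
      intro i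
      split_ifs with hi
      · have := hc (show i ≤ κ from hi.le)
        nlinarith [ht1 i]
      · have := hc (show κ ≤ i from not_lt.mp hi)
        nlinarith [ht0 i]
    have hcard : (#{i : Fin N | i.val < k} : ℝ) = k := by
      rw [Fin.card_filter_val_lt, min_eq_right hk.le]
    calc ∑ i, c i * t i ≤ ∑ i, (c κ * t i + if i.val < k then c i - c κ else 0) :=
          sum_le_sum fun i _ => hpt i
      _ = c κ * (∑ i, t i - k) + ∑ i with i.val < k, c i := by
          rw [sum_add_distrib, ← mul_sum, ← sum_filter, sum_sub_distrib, sum_const,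
            nsmul_eq_mul, hcard]
          ring
      _ ≤ ∑ i with i.val < k, c i := by
          nlinarith [hc0 κ]
  · rw [filter_true_of_mem fun i _ => i.isLt.trans_le hk]
    exact sum_le_sum fun i _ => mul_le_of_le_one_right (hc0 i) (ht1 i)

namespace Matrix

theorem of_mul_transpose_of_eq_one_iff {m r : Type*} [Fintype m] [DecidableEq r]
    {u : r → m → ℝ} :
    of u * (of u)ᵀ = 1 ↔ ∀ i j, ∑ l, u i l * u j l = if i = j then 1 else 0 := by
  simp [← Matrix.ext_iff, mul_apply, one_apply]

theorem sum_smul_vecMulVec_eq_transpose_mul_diagonal_mul {α m n r : Type*} [CommSemiring α]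
    [Fintype r] [DecidableEq r] (σ : r → α) (u : r → m → α) (v : r → n → α) :
    ∑ i, σ i • vecMulVec (u i) (v i) = (of u)ᵀ * diagonal σ * of v := by
  ext x y
  rw [mul_apply]
  simp only [sum_apply, smul_apply, vecMulVec_apply, mul_diagonal, transpose_apply, of_apply,
    smul_eq_mul]
  exact sum_congr rfl fun i _ => by ring

variable {m n r : Type*} [Fintype m] [Fintype r]

theorem trace_transpose_mul_self_eq_sum_sq [Fintype n] (M : Matrix m n ℝ) :
    trace (Mᵀ * M) = ∑ i, ∑ j, M i j ^ 2 := by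
  simp only [trace, diag, mul_apply, transpose_apply, sq]
  exact sum_comm

theorem transpose_mul_self_apply_self_nonneg (M : Matrix m n ℝ) (j : n) : 0 ≤ (Mᵀ * M) j j := by
  simp only [mul_apply, transpose_apply]
  exact sum_nonneg fun i _ => mul_self_nonneg _

theorem trace_transpose_mul_self_nonneg [Fintype n] (M : Matrix m n ℝ) : 0 ≤ trace (Mᵀ * M) :=
  sum_nonneg fun j _ => transpose_mul_self_apply_self_nonneg M j

section Orthonormal

variable [DecidableEq r]

theorem transpose_mul_self_transpose_mul {u : Matrix r m ℝ} (hu : u * uᵀ = 1)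
    (M : Matrix r n ℝ) : (uᵀ * M)ᵀ * (uᵀ * M) = Mᵀ * M := by
  rw [transpose_mul, transpose_transpose, Matrix.mul_assoc, ← Matrix.mul_assoc u, hu,
    Matrix.one_mul]

theorem trace_transpose_mul_self_mul [Fintype n] {v : Matrix r n ℝ} (hv : v * vᵀ = 1)
    (M : Matrix m r ℝ) :
    trace ((M * v)ᵀ * (M * v)) = trace (Mᵀ * M) := by
  rw [transpose_mul, Matrix.mul_assoc, trace_mul_comm, Matrix.mul_assoc, Matrix.mul_assoc, hv,
    Matrix.mul_one]

theorem trace_transpose_mul_self_transpose_mul_diagonal_mul [Fintype n] {u : Matrix r m ℝ}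
    {v : Matrix r n ℝ} (hu : u * uᵀ = 1) (hv : v * vᵀ = 1) (σ : r → ℝ) :
    trace ((uᵀ * diagonal σ * v)ᵀ * (uᵀ * diagonal σ * v)) = ∑ i, σ i ^ 2 := by
  rw [trace_transpose_mul_self_mul hv, transpose_mul_self_transpose_mul hu]
  simp [trace, sq]

theorem trace_transpose_mul_self_mul_diagonal (M : Matrix m r ℝ) (σ : r → ℝ) :
    trace ((M * diagonal σ)ᵀ * (M * diagonal σ)) = ∑ i, σ i ^ 2 * (Mᵀ * M) i i := by
  rw [trace_transpose_mul_self_eq_sum_sq, sum_comm]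
  simp only [mul_diagonal]
  simp only [mul_apply, transpose_apply, mul_sum]
  exact sum_congr rfl fun i _ => sum_congr rfl fun x _ => by ring

variable [DecidableEq m]

/-- Pythagoras for the orthogonal projection `qᵀ * q` onto the row space of `q`. -/
theorem transpose_mul_self_eq_add {q : Matrix r m ℝ} (hq : q * qᵀ = 1) (M : Matrix m n ℝ) :
    Mᵀ * M = (q * M)ᵀ * (q * M) + ((1 - qᵀ * q) * M)ᵀ * ((1 - qᵀ * q) * M) := by
  have hP : qᵀ * q * (qᵀ * q) = qᵀ * q := by
    rw [Matrix.mul_assoc, ← Matrix.mul_assoc q, hq, Matrix.one_mul]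
  have hR : (1 - qᵀ * q)ᵀ * (1 - qᵀ * q) = 1 - qᵀ * q := by
    rw [transpose_sub, transpose_one, transpose_mul, transpose_transpose, Matrix.sub_mul,
      Matrix.mul_sub, Matrix.mul_sub, hP]
    simp
  calc Mᵀ * M = Mᵀ * (qᵀ * q + (1 - qᵀ * q)ᵀ * (1 - qᵀ * q)) * M := by
        rw [hR, add_sub_cancel, Matrix.mul_one]
    _ = _ := by simp only [transpose_mul, Matrix.mul_add, Matrix.add_mul, Matrix.mul_assoc]

theorem trace_transpose_mul_self_eq_add [Fintype n] {q : Matrix r m ℝ} (hq : q * qᵀ = 1)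
    (M : Matrix m n ℝ) :
    trace (Mᵀ * M) =
      trace ((q * M)ᵀ * (q * M)) + trace (((1 - qᵀ * q) * M)ᵀ * ((1 - qᵀ * q) * M)) := by
  rw [← trace_add, ← transpose_mul_self_eq_add hq]

theorem transpose_mul_self_apply_self_le {q : Matrix r m ℝ} (hq : q * qᵀ = 1)
    (M : Matrix m n ℝ) (j : n) : ((q * M)ᵀ * (q * M)) j j ≤ (Mᵀ * M) j j := by
  rw [transpose_mul_self_eq_add hq M, add_apply]
  linarith [transpose_mul_self_apply_self_nonneg ((1 - qᵀ * q) * M) j]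

theorem trace_transpose_mul_self_le [Fintype n] {q : Matrix r m ℝ} (hq : q * qᵀ = 1)
    (M : Matrix m n ℝ) :
    trace ((q * M)ᵀ * (q * M)) ≤ trace (Mᵀ * M) :=
  sum_le_sum fun j _ => transpose_mul_self_apply_self_le hq M j

end Orthonormal

theorem exists_mul_transpose_eq_one_and_transpose_mul_mul_eq [Fintype n] (E : Matrix m n ℝ) :
    ∃ q : Matrix (Fin E.rank) m ℝ, q * qᵀ = 1 ∧ qᵀ * q * E = E := by
  let V : Submodule ℝ (EuclideanSpace ℝ m) :=
    (Submodule.span ℝ (Set.range E.col)).map (WithLp.linearEquiv 2 ℝ (m → ℝ)).symm.toLinearMap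
  have hV : Module.finrank ℝ V = E.rank := by
    rw [rank_eq_finrank_span_cols]; exact LinearEquiv.finrank_map_eq _ _
  let b := (stdOrthonormalBasis ℝ V).reindex (finCongr hV)
  have hcol : ∀ y, WithLp.toLp 2 (E.col y) ∈ V := fun y =>
    Submodule.mem_map_of_mem (Submodule.subset_span ⟨y, rfl⟩)
  refine ⟨Matrix.of fun j x => (b j : EuclideanSpace ℝ m) x, ?_, ?_⟩
  · ext i j
    have := b.inner_eq_ite i j
    rw [Submodule.coe_inner, PiLp.inner_apply] at this
    simpa only [mul_apply, of_apply, transpose_apply, one_apply, RCLike.inner_apply,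
      Real.ringHom_apply, mul_comm] using this
  · ext x y
    refine Eq.trans ?_ (congrArg (fun w : V => (w : EuclideanSpace ℝ m) x)
      (b.sum_repr' ⟨_, hcol y⟩))
    simp only [mul_apply, transpose_apply, of_apply, sum_mul, col, Submodule.coe_inner,
      PiLp.inner_apply, RCLike.inner_apply, Real.ringHom_apply, AddSubmonoidClass.coe_finsetSum,
      SetLike.val_smul, WithLp.ofLp_sum, WithLp.ofLp_smul, Finset.sum_apply, Pi.smul_apply,
      smul_eq_mul]
    rw [sum_comm]
    exact sum_congr rfl fun _ _ => sum_congr rfl fun _ _ => by ring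

theorem trace_transpose_mul_self_mul_svd_le [Fintype n] [DecidableEq m] {ι : Type*} [Fintype ι]
    [DecidableEq ι] {N k : ℕ} {u : Matrix (Fin N) m ℝ} {v : Matrix (Fin N) n ℝ}
    {σ : Fin N → ℝ} (hu : u * uᵀ = 1) (hv : v * vᵀ = 1) (hσ : Antitone σ) (hσ0 : ∀ i, 0 ≤ σ i)
    {q : Matrix ι m ℝ} (hq : q * qᵀ = 1) (hk : Fintype.card ι ≤ k) :
    trace ((q * (uᵀ * diagonal σ * v))ᵀ * (q * (uᵀ * diagonal σ * v))) ≤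
      ∑ i with i.val < k, σ i ^ 2 := by
  set t : Fin N → ℝ := fun i => ((q * uᵀ)ᵀ * (q * uᵀ)) i i
  have ht0 : ∀ i, 0 ≤ t i := fun i => transpose_mul_self_apply_self_nonneg _ i
  have ht1 : ∀ i, t i ≤ 1 := fun i => by
    have := transpose_mul_self_apply_self_le hq uᵀ i
    rwa [transpose_transpose, hu, one_apply_eq] at this
  have hts : ∑ i, t i ≤ k :=
    calc ∑ i, t i = trace ((u * qᵀ)ᵀ * (u * qᵀ)) := by
          show trace (_ * _) = _
          rw [trace_mul_comm]
          simp only [transpose_mul, transpose_transpose]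
      _ ≤ trace (qᵀᵀ * qᵀ) := trace_transpose_mul_self_le hu qᵀ
      _ = Fintype.card ι := by simp [hq]
      _ ≤ k := by exact_mod_cast hk
  have hσ2 : Antitone (σ · ^ 2) := fun _ j hij => pow_le_pow_left₀ (hσ0 j) (hσ hij) 2
  rw [show q * (uᵀ * diagonal σ * v) = q * uᵀ * diagonal σ * v by simp only [Matrix.mul_assoc],
    trace_transpose_mul_self_mul hv, trace_transpose_mul_self_mul_diagonal]
  exact hσ2.sum_mul_le_sum_filter_val_lt (fun i => sq_nonneg (σ i)) ht0 ht1 hts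

theorem sum_sq_tail_le_trace_transpose_mul_self_sub_of_rank_le [Fintype n] [DecidableEq m] {N : ℕ}
    {u : Matrix (Fin N) m ℝ} {v : Matrix (Fin N) n ℝ} {σ : Fin N → ℝ} (hu : u * uᵀ = 1)
    (hv : v * vᵀ = 1) (hσ : Antitone σ) (hσ0 : ∀ i, 0 ≤ σ i) {k : ℕ} {E : Matrix m n ℝ}
    (hE : E.rank ≤ k) :
    ∑ i with k ≤ i.val, σ i ^ 2 ≤
      trace ((uᵀ * diagonal σ * v - E)ᵀ * (uᵀ * diagonal σ * v - E)) := by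
  set A := uᵀ * diagonal σ * v
  obtain ⟨q, hq, hqE⟩ := exists_mul_transpose_eq_one_and_transpose_mul_mul_eq E
  have hRE : (1 - qᵀ * q) * (A - E) = (1 - qᵀ * q) * A := by
    rw [Matrix.mul_sub, Matrix.sub_mul 1 _ E, Matrix.one_mul, hqE, sub_self, sub_zero]
  have hqA := trace_transpose_mul_self_mul_svd_le hu hv hσ hσ0 hq
    (by rwa [Fintype.card_fin] : Fintype.card (Fin E.rank) ≤ k)
  have hA := trace_transpose_mul_self_eq_add hq A
  have hAE := trace_transpose_mul_self_eq_add hq (A - E)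
  rw [trace_transpose_mul_self_transpose_mul_diagonal_mul hu hv] at hA
  rw [hRE] at hAE
  have hsplit := sum_filter_add_sum_filter_not univ (fun i : Fin N => i.val < k) (σ · ^ 2)
  simp only [not_lt] at hsplit
  linarith [trace_transpose_mul_self_nonneg (q * (A - E))]

end Matrix

theorem stmt_11_general (m n : ℕ) (A : Matrix (Fin m) (Fin n) ℝ)
    (σ : Fin (min m n) → ℝ) (u : Fin (min m n) → Fin m → ℝ)
    (v : Fin (min m n) → Fin n → ℝ)
    (hσpos : ∀ i, 0 ≤ σ i) (hσmono : ∀ i j : Fin (min m n), i ≤ j → σ j ≤ σ i)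
    (hu : ∀ i j, ∑ l, u i l * u j l = if i = j then 1 else 0)
    (hv : ∀ i j, ∑ l, v i l * v j l = if i = j then 1 else 0)
    (hA : A = ∑ i, σ i • vecMulVec (u i) (v i))
    (frob2 : Matrix (Fin m) (Fin n) ℝ → ℝ)
    (hfrob2 : ∀ M, frob2 M = ∑ i, ∑ j, (M i j) ^ 2)
    (k : ℕ)
    (Ak : Matrix (Fin m) (Fin n) ℝ)
    (hAk : Ak = ∑ i : Fin (min m n) with i.val < k, σ i • vecMulVec (u i) (v i)) :
    frob2 (A - Ak) = (∑ i : Fin (min m n) with k ≤ i.val, σ i ^ 2) ∧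
    ∀ E : Matrix (Fin m) (Fin n) ℝ, E.rank ≤ k → frob2 (A - Ak) ≤ frob2 (A - E) := by
  have hu' := of_mul_transpose_of_eq_one_iff.mpr hu
  have hv' := of_mul_transpose_of_eq_one_iff.mpr hv
  have hfrob : ∀ M, frob2 M = trace (Mᵀ * M) := fun M => by
    rw [hfrob2, trace_transpose_mul_self_eq_sum_sq]
  rw [sum_smul_vecMulVec_eq_transpose_mul_diagonal_mul σ u v] at hA
  have hAk' : Ak = (of u)ᵀ * diagonal (fun i => if i.val < k then σ i else 0) * of v := by
    rw [hAk, sum_filter, ← sum_smul_vecMulVec_eq_transpose_mul_diagonal_mul _ u v]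
    simp only [ite_smul, zero_smul]
  have hAAk : A - Ak = (of u)ᵀ * diagonal (fun i => if k ≤ i.val then σ i else 0) * of v := by
    rw [hA, hAk', ← Matrix.sub_mul, ← Matrix.mul_sub, diagonal_sub]
    congr 3
    ext i
    split_ifs <;> first | omega | ring
  have hfirst : frob2 (A - Ak) = ∑ i : Fin (min m n) with k ≤ i.val, σ i ^ 2 := by
    rw [hfrob, hAAk, trace_transpose_mul_self_transpose_mul_diagonal_mul hu' hv', sum_filter]
    exact sum_congr rfl fun i _ => by split_ifs <;> simp
  refine ⟨hfirst, fun E hE => ?_⟩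
  rw [hfirst, hfrob, hA]
  exact sum_sq_tail_le_trace_transpose_mul_self_sub_of_rank_le hu' hv' hσmono hσpos hE

theorem stmt_11 (m n : ℕ) (A : Matrix (Fin m) (Fin n) ℝ)
    (σ : Fin (min m n) → ℝ) (u : Fin (min m n) → Fin m → ℝ)
    (v : Fin (min m n) → Fin n → ℝ)
    (hσpos : ∀ i, 0 ≤ σ i) (hσmono : ∀ i j : Fin (min m n), i ≤ j → σ j ≤ σ i)
    (hu : ∀ i j, ∑ l, u i l * u j l = if i = j then 1 else 0)
    (hv : ∀ i j, ∑ l, v i l * v j l = if i = j then 1 else 0)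
    (hA : A = ∑ i, σ i • vecMulVec (u i) (v i))
    (frob2 : Matrix (Fin m) (Fin n) ℝ → ℝ)
    (hfrob2 : ∀ M, frob2 M = ∑ i, ∑ j, (M i j) ^ 2)
    (k : ℕ) (hk : k < A.rank)
    (Ak : Matrix (Fin m) (Fin n) ℝ)
    (hAk : Ak = ∑ i : Fin (min m n) with i.val < k, σ i • vecMulVec (u i) (v i)) :
    frob2 (A - Ak) = (∑ i : Fin (min m n) with k ≤ i.val, σ i ^ 2) ∧
    ∀ E : Matrix (Fin m) (Fin n) ℝ, E.rank ≤ k → frob2 (A - Ak) ≤ frob2 (A - E) :=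
  stmt_11_general m n A σ u v hσpos hσmono hu hv hA frob2 hfrob2 k Ak hAk
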